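/- Let L : ℕ → ℝ and for s ≥ 0 define L̂ₛ(N) = (Σ_{i=0}^{N} L(i) − s)/N for N ≥ 1. If 0 ≤ s₁ < s₂ and N₁ maximizes L̂_{s₁} and N₂ maximizes L̂_{s₂} over {1,...,M} (taking the least maximizers), then N₁ ≤ N₂: larger fixed replacement costs weakly increase the optimal cycle length. -/
import Mathlib


noncomputable def LhatS (L : ℕ → ℝ) (s : ℝ) (N : ℕ) : ℝ :=
  (∑ i ∈ Finset.range (N + 1), L i - s) / N

theorem optimal_cycle_length_monotone_in_cost
    (L : ℕ → ℝ) (M : ℕ) (s₁ s₂ : ℝ) (hs₁ : 0 ≤ s₁) (hs : s₁ < s₂)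
    (N₁ N₂ : ℕ)
    (hN₁mem : N₁ ∈ Finset.Icc 1 M)
    (hN₁max : ∀ N ∈ Finset.Icc 1 M, LhatS L s₁ N ≤ LhatS L s₁ N₁)
    (hN₁least : ∀ N ∈ Finset.Icc 1 M,
      (∀ N' ∈ Finset.Icc 1 M, LhatS L s₁ N' ≤ LhatS L s₁ N) → N₁ ≤ N)
    (hN₂mem : N₂ ∈ Finset.Icc 1 M)
    (hN₂max : ∀ N ∈ Finset.Icc 1 M, LhatS L s₂ N ≤ LhatS L s₂ N₂)
    (hN₂least : ∀ N ∈ Finset.Icc 1 M,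
      (∀ N' ∈ Finset.Icc 1 M, LhatS L s₂ N' ≤ LhatS L s₂ N) → N₂ ≤ N) :
    N₁ ≤ N₂ := by
  by_contra h
  push_neg at h
  have h1 := hN₁max N₂ hN₂mem
  have h2 := hN₂max N₁ hN₁mem
  simp only [Finset.mem_Icc] at hN₁mem hN₂mem
  have hn2 : (0:ℝ) < (N₂:ℝ) := by exact_mod_cast Nat.lt_of_lt_of_le Nat.zero_lt_one hN₂mem.1
  have hn1 : (0:ℝ) < (N₁:ℝ) := by exact_mod_cast Nat.lt_of_lt_of_le Nat.zero_lt_one hN₁mem.1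
  have hlt : (N₂:ℝ) < (N₁:ℝ) := by exact_mod_cast h
  unfold LhatS at h1 h2
  rw [div_le_div_iff₀ hn2 hn1] at h1
  rw [div_le_div_iff₀ hn1 hn2] at h2
  nlinarith [mul_pos (sub_pos.mpr hs) (sub_pos.mpr hlt)]
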